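/- Rectangular bases: for n ≥ 2, define ψ_rect ∈ (ℂ²)^{⊗n} as the vector with amplitude 2^{−(n−1)/2} on the computational basis state |0,1,1,…,1⟩ and on every computational basis state |1,j₂,…,j_n⟩ with (j₂,…,j_n) ≠ (0,…,0), and amplitude 0 on all other basis states. Then ψ_rect is a unit vector and its orbit {U_g ψ_rect : g ∈ {0,1}ⁿ} under G_tetra^{(n)} is an orthonormal basis of (ℂ²)^{⊗n}. -/

import Mathlib

open Matrix Complex Finset

/-- Pauli X. -/
noncomputable def X2 : Matrix (Fin 2) (Fin 2) ℂ := !![0, 1; 1, 0]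

/-- Pauli Y. -/
noncomputable def Y2 : Matrix (Fin 2) (Fin 2) ℂ := !![0, -Complex.I; Complex.I, 0]

/-- Pauli Z. -/
noncomputable def Z2 : Matrix (Fin 2) (Fin 2) ℂ := !![1, 0; 0, -1]

/-- Tensor product of single-qubit operators, as a matrix on (ℂ²)^{⊗n}. -/
noncomputable def tensorOp2 {n : ℕ} (A : Fin n → Matrix (Fin 2) (Fin 2) ℂ) :
    Matrix (Fin n → Fin 2) (Fin n → Fin 2) ℂ :=
  Matrix.of fun v w => ∏ i, A i (v i) (w i)

/-- Single-site operator A acting on qubit i (identity elsewhere). -/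
noncomputable def single2 {n : ℕ} (i : Fin n) (A : Matrix (Fin 2) (Fin 2) ℂ) :
    Matrix (Fin n → Fin 2) (Fin n → Fin 2) ℂ :=
  tensorOp2 fun j => if j = i then A else 1

/-- The inner product ⟨f, g⟩ = Σ conj(f v) g v (antilinear in the first argument). -/
noncomputable def dotc {ι : Type*} [Fintype ι] (f g : ι → ℂ) : ℂ :=
  ∑ v, (starRingEnd ℂ) (f v) * g v

/-- The unitaries U_g of G_tetra^{(n)}, g = (z₁,…,z_{n−1},x) ∈ {0,1}ⁿ:
U_g = (Z^{(1)}Z^{(2)})^{z₁}···(Z^{(n−1)}Z^{(n)})^{z_{n−1}}·(X⊗⋯⊗X)^x. -/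
noncomputable def Ug2 (n : ℕ) [NeZero n] (g : Fin n → Fin 2) :
    Matrix (Fin n → Fin 2) (Fin n → Fin 2) ℂ :=
  (((List.finRange (n - 1)).map fun i =>
      (single2 (⟨i.val, by have := i.isLt; omega⟩ : Fin n) Z2 *
          single2 (⟨i.val + 1, by have := i.isLt; omega⟩ : Fin n) Z2)
        ^ (g ⟨i.val, by have := i.isLt; omega⟩).val).prod) *
    (tensorOp2 fun _ : Fin n => X2)
      ^ (g ⟨n - 1, by have := Nat.pos_of_ne_zero (NeZero.ne n); omega⟩).val
/-- The rectangular fiducial state: amplitude 2^{−(n−1)/2} on |0,1,…,1⟩ and on every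
|1,j₂,…,jₙ⟩ with (j₂,…,jₙ) ≠ (0,…,0); zero elsewhere. -/
noncomputable def psiRect (n : ℕ) [NeZero n] : (Fin n → Fin 2) → ℂ := fun w =>
  if (w 0 = 0 ∧ ∀ i : Fin n, i ≠ 0 → w i = 1) ∨
     (w 0 = 1 ∧ ∃ i : Fin n, i ≠ 0 ∧ w i = 1)
  then ((Real.sqrt 2 : ℂ) ^ (n - 1))⁻¹ else 0


/-!
Writing `g = (z, x)`, the unitary `U_g` acts on amplitudes by `(U_g f)(v) = χ_z(v) f(v + x𝟙)`,
where `χ_z(v) = ∏ᵢ (-1)^{zᵢ(vᵢ + vᵢ₊₁)}` is a character of `(ℤ/2)ⁿ` that is trivial on `𝟙`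
and nontrivial unless `z = 0`. Translating by `x𝟙`,
`⟨U_g ψ, U_h ψ⟩ = ∑ᵥ χ_{z+z'}(v) ψ(v) ψ(v + (x + x')𝟙)`. The support `S` of `ψ` contains exactly
one of `v` and `v + 𝟙` for every `v`: for `x ≠ x'` every term vanishes, and for `x = x'` the sum
is `2^{-(n-1)} ∑_{v ∈ S} χ_{z+z'}(v)`, which is half of the full character sum, i.e. `[z = z']`.
Being `2ⁿ` orthonormal vectors in a space of dimension `2ⁿ`, the orbit spans.
-/

namespace TetraBasis

lemma fin_two_add_self (a : Fin 2) : a + a = 0 := by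
  fin_cases a <;> rfl

lemma fin_two_add_eq_zero_iff (a b : Fin 2) : a + b = 0 ↔ a = b := by
  fin_cases a <;> fin_cases b <;> decide

def signChar : AddChar (Fin 2) ℂ where
  toFun a := (-1) ^ a.val
  map_zero_eq_one' := pow_zero _
  map_add_eq_mul' a b := by
    fin_cases a <;> fin_cases b <;> simp [fin_two_add_self 1]

lemma signChar_apply (a : Fin 2) : signChar a = (-1) ^ a.val := rfl

lemma signChar_mul (a b : Fin 2) : signChar (a * b) = signChar b ^ a.val := by
  fin_cases a <;> fin_cases b <;> simp [signChar_apply]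

lemma conj_signChar (a : Fin 2) : starRingEnd ℂ (signChar a) = signChar a := by
  simp [signChar_apply]

lemma list_prod_map_diagonal {ι κ R : Type*} [Fintype κ] [DecidableEq κ] [CommSemiring R]
    (l : List ι) (d : ι → κ → R) :
    (l.map fun i => diagonal (d i)).prod = diagonal (l.map d).prod := by
  induction l with
  | nil => simp
  | cons i l ih => simp [ih, diagonal_mul_diagonal, Pi.mul_def]

lemma two_nsmul_sum_eq_sum_of_add_mem_iff {G M : Type*} [AddGroup G] [Fintype G]
    [DecidableEq G] [AddCommMonoid M] (f : G → M) (t : G) (hf : ∀ v, f (v + t) = f v)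
    (S : Finset G) (hS : ∀ v, v + t ∈ S ↔ v ∉ S) : 2 • ∑ v ∈ S, f v = ∑ v, f v := by
  rw [two_nsmul, ← sum_add_sum_compl S f]
  congr 1
  refine sum_nbij' (· + t) (· - t) (fun v hv => ?_) (fun v hv => ?_) (fun v _ => ?_)
    (fun v _ => ?_) (fun v _ => (hf v).symm)
  · simpa [hS] using hv
  · rw [mem_compl] at hv
    simpa [hv] using (hS (v - t)).not
  · simp
  · simp

lemma linearIndependent_of_dotc_eq_ite {ι κ : Type*} [Fintype ι] [Fintype κ] [DecidableEq κ]
    (w : κ → ι → ℂ) (hw : ∀ i j, dotc (w i) (w j) = if i = j then 1 else 0) :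
    LinearIndependent ℂ w := by
  refine Fintype.linearIndependent_iff.mpr fun c hc i => ?_
  have hlin : dotc (w i) (∑ j, c j • w j) = ∑ j, c j * dotc (w i) (w j) := by
    simp only [dotc, Finset.sum_apply, Pi.smul_apply, smul_eq_mul, mul_sum]
    exact sum_comm.trans (sum_congr rfl fun j _ => sum_congr rfl fun v _ => by ring)
  simp only [hw, mul_ite, mul_one, mul_zero, sum_ite_eq, mem_univ, if_true, hc] at hlin
  simpa [dotc] using hlin.symm

section Pauli

variable {n : ℕ}

lemma Z2_eq_diagonal : Z2 = diagonal fun a => signChar a := by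
  ext a b
  fin_cases a <;> fin_cases b <;> simp [Z2, signChar_apply]

lemma X2_apply (a b : Fin 2) : X2 a b = if b = a + 1 then 1 else 0 := by
  fin_cases a <;> fin_cases b <;> simp [X2]

lemma tensorOp2_diagonal (d : Fin n → Fin 2 → ℂ) :
    tensorOp2 (fun j => diagonal (d j)) = diagonal fun v => ∏ j, d j (v j) := by
  ext v w
  simp only [tensorOp2, of_apply, diagonal_apply, prod_ite_zero, mem_univ, true_implies,
    funext_iff]

lemma single2_diagonal (i : Fin n) (d : Fin 2 → ℂ) :
    single2 i (diagonal d) = diagonal fun v => d (v i) := by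
  have hdiag : (fun j => if j = i then diagonal d else 1) =
      fun j => diagonal (if j = i then d else 1) := by
    funext j
    split_ifs <;> simp
  rw [single2, hdiag, tensorOp2_diagonal]
  simp [ite_apply]

lemma single2_Z2_mul_single2_Z2_pow (i j : Fin n) (k : Fin 2) :
    (single2 i Z2 * single2 j Z2) ^ k.val = diagonal fun v => signChar (k * (v i + v j)) := by
  rw [Z2_eq_diagonal, single2_diagonal, single2_diagonal, diagonal_mul_diagonal, diagonal_pow]
  simp [Pi.pow_def, AddChar.map_add_eq_mul, signChar_mul, mul_pow]

lemma tensorOp2_X2_mulVec (f : (Fin n → Fin 2) → ℂ) :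
    (tensorOp2 fun _ : Fin n => X2) *ᵥ f = fun v => f (v + 1) := by
  funext v
  have hentry (w) : tensorOp2 (fun _ : Fin n => X2) v w = if w = v + 1 then 1 else 0 := by
    simp [tensorOp2, X2_apply, prod_boole, funext_iff]
  simp [mulVec, dotProduct, hentry]

lemma tensorOp2_X2_pow_mulVec (x : Fin 2) (f : (Fin n → Fin 2) → ℂ) :
    (tensorOp2 fun _ : Fin n => X2) ^ x.val *ᵥ f = fun v => f (v + fun _ => x) := by
  fin_cases x
  · change 1 *ᵥ f = fun v => f (v + 0)
    simp
  · change _ ^ 1 *ᵥ f = fun v => f (v + 1)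
    rw [pow_one, tensorOp2_X2_mulVec]

end Pauli

section edgeChar

variable {m : ℕ}

def edgeChar (z : Fin m → Fin 2) : AddChar (Fin (m + 1) → Fin 2) ℂ where
  toFun v := ∏ i, signChar (z i * (v i.castSucc + v i.succ))
  map_zero_eq_one' := by simp
  map_add_eq_mul' v w := by
    rw [← prod_mul_distrib]
    refine prod_congr rfl fun i _ => ?_
    rw [← AddChar.map_add_eq_mul]
    simp only [Pi.add_apply, add_add_add_comm, mul_add]

lemma edgeChar_apply (z : Fin m → Fin 2) (v : Fin (m + 1) → Fin 2) :
    edgeChar z v = ∏ i, signChar (z i * (v i.castSucc + v i.succ)) := rfl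

lemma edgeChar_add (z z' : Fin m → Fin 2) : edgeChar (z + z') = edgeChar z * edgeChar z' := by
  ext v
  simp only [AddChar.mul_apply, edgeChar_apply, ← prod_mul_distrib, ← AddChar.map_add_eq_mul,
    Pi.add_apply, add_mul]

lemma edgeChar_zero : edgeChar (0 : Fin m → Fin 2) = 1 := by
  ext v
  simp [edgeChar_apply]

lemma edgeChar_const (z : Fin m → Fin 2) (a : Fin 2) : edgeChar z (fun _ => a) = 1 := by
  simp [edgeChar_apply, fin_two_add_self]

lemma conj_edgeChar (z : Fin m → Fin 2) (v : Fin (m + 1) → Fin 2) :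
    starRingEnd ℂ (edgeChar z v) = edgeChar z v := by
  simp [edgeChar_apply, conj_signChar]

lemma edgeChar_eq_one_iff (z : Fin m → Fin 2) : edgeChar z = 1 ↔ z = 0 := by
  refine ⟨fun h => ?_, fun h => h ▸ edgeChar_zero⟩
  by_contra hz
  obtain ⟨i, hi⟩ := Function.ne_iff.mp hz
  -- the indicator of `{0, …, i}` has a single odd edge, namely `i`
  set v : Fin (m + 1) → Fin 2 := fun k => if k ≤ i.castSucc then 1 else 0
  have hedge (j : Fin m) : v j.castSucc + v j.succ = if j = i then 1 else 0 := by
    simp only [v, Fin.le_def, Fin.val_castSucc, Fin.val_succ, Fin.ext_iff]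
    split_ifs <;> first | rfl | omega
  have hv : edgeChar z v = signChar (z i) := by
    rw [edgeChar_apply, Fintype.prod_eq_single i fun j hj => by simp [hedge, hj]]
    simp [hedge]
  have h1 : signChar (z i) = 1 := by rw [← hv, h, AddChar.one_apply]
  rw [Fin.eq_one_of_ne_zero _ hi, signChar_apply] at h1
  norm_num at h1

lemma Ug2_mulVec (g : Fin (m + 1) → Fin 2) (f : (Fin (m + 1) → Fin 2) → ℂ) :
    Ug2 (m + 1) g *ᵥ f =
      fun v => edgeChar (Fin.init g) v * f (v + fun _ => g (Fin.last m)) := by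
  have hZ : ((List.finRange m).map fun i =>
      (single2 i.castSucc Z2 * single2 i.succ Z2) ^ (Fin.init g i).val).prod =
        diagonal (edgeChar (Fin.init g)) := by
    simp only [single2_Z2_mul_single2_Z2_pow, list_prod_map_diagonal, ← Fin.prod_univ_def]
    congr 1
    ext v
    simp [edgeChar_apply]
  change (((List.finRange m).map fun i =>
      (single2 i.castSucc Z2 * single2 i.succ Z2) ^ (Fin.init g i).val).prod *
        (tensorOp2 fun _ => X2) ^ (g (Fin.last m)).val) *ᵥ f = _
  rw [hZ, ← mulVec_mulVec, tensorOp2_X2_pow_mulVec]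
  exact funext fun v => mulVec_diagonal _ _ v

lemma dotc_Ug2_mulVec (f : (Fin (m + 1) → Fin 2) → ℂ) (g h : Fin (m + 1) → Fin 2) :
    dotc (Ug2 (m + 1) g *ᵥ f) (Ug2 (m + 1) h *ᵥ f) =
      ∑ v, edgeChar (Fin.init g + Fin.init h) v *
        (starRingEnd ℂ (f v) * f (v + fun _ => g (Fin.last m) + h (Fin.last m))) := by
  rw [dotc, ← Equiv.sum_comp (Equiv.addRight fun _ => g (Fin.last m))]
  refine sum_congr rfl fun v _ => ?_
  have hflip : ((v + fun _ => g (Fin.last m)) + fun _ => g (Fin.last m)) = v := by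
    ext i
    simp [add_assoc, fin_two_add_self]
  simp only [Equiv.coe_addRight, Ug2_mulVec, map_mul, conj_edgeChar, AddChar.map_add_eq_mul,
    edgeChar_const, edgeChar_add, AddChar.mul_apply, hflip, add_assoc, mul_one]
  change _ = _ * _ * (_ * f (v + ((fun _ => g (Fin.last m)) + fun _ => h (Fin.last m))))
  ring

end edgeChar

def rectSupport (n : ℕ) [NeZero n] : Finset (Fin n → Fin 2) :=
  {w | (w 0 = 0 ∧ ∀ i : Fin n, i ≠ 0 → w i = 1) ∨ (w 0 = 1 ∧ ∃ i : Fin n, i ≠ 0 ∧ w i = 1)}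

section rectSupport

variable {n : ℕ} [NeZero n]

lemma add_one_mem_rectSupport (v : Fin n → Fin 2) :
    v + 1 ∈ rectSupport n ↔ v ∉ rectSupport n := by
  have hflip (a : Fin 2) : (a + 1 = 0 ↔ a = 1) ∧ (a + 1 = 1 ↔ a = 0) ∧ (a = 0 ↔ ¬a = 1) := by
    fin_cases a <;> decide
  by_cases h : v 0 = 1 <;> simp [rectSupport, hflip, h]

lemma psiRect_apply (v : Fin n → Fin 2) :
    psiRect n v = if v ∈ rectSupport n then ((Real.sqrt 2 : ℂ) ^ (n - 1))⁻¹ else 0 := by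
  simp [psiRect, rectSupport]

lemma conj_psiRect (v : Fin n → Fin 2) : starRingEnd ℂ (psiRect n v) = psiRect n v := by
  rw [psiRect_apply]
  split_ifs <;> simp [Complex.conj_ofReal]

lemma psiRect_mul_self (v : Fin n → Fin 2) :
    psiRect n v * psiRect n v = if v ∈ rectSupport n then ((2 : ℂ) ^ (n - 1))⁻¹ else 0 := by
  rw [psiRect_apply]
  split_ifs
  · rw [← mul_inv, ← mul_pow, ← Complex.ofReal_mul, Real.mul_self_sqrt zero_le_two]
    norm_num
  · simp

lemma psiRect_mul_psiRect_add_one (v : Fin n → Fin 2) : psiRect n v * psiRect n (v + 1) = 0 := by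
  simp only [psiRect_apply, add_one_mem_rectSupport]
  split_ifs <;> simp

end rectSupport

lemma sum_rectSupport_edgeChar {m : ℕ} (z : Fin m → Fin 2) :
    ∑ v ∈ rectSupport (m + 1), edgeChar z v = if z = 0 then 2 ^ m else 0 := by
  have h := two_nsmul_sum_eq_sum_of_add_mem_iff (edgeChar z) 1
    (fun v => by rw [AddChar.map_add_eq_mul, show edgeChar z 1 = 1 from edgeChar_const z 1,
      mul_one]) _ add_one_mem_rectSupport
  rw [AddChar.sum_eq_ite] at h
  by_cases hz : z = 0
  · rw [if_pos (show edgeChar z = 0 from (edgeChar_eq_one_iff z).mpr hz)] at h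
    rw [if_pos hz]
    simp only [Fintype.card_fun, Fintype.card_fin, Nat.cast_pow, Nat.cast_ofNat, two_smul] at h
    linear_combination h / 2
  · rw [if_neg (show edgeChar z ≠ 0 from mt (edgeChar_eq_one_iff z).mp hz)] at h
    rw [if_neg hz]
    simpa using h

lemma dotc_Ug2_mulVec_psiRect {m : ℕ} (g h : Fin (m + 1) → Fin 2) :
    dotc (Ug2 (m + 1) g *ᵥ psiRect (m + 1)) (Ug2 (m + 1) h *ᵥ psiRect (m + 1)) =
      if g = h then 1 else 0 := by
  have hgh : g = h ↔ Fin.init g + Fin.init h = 0 ∧ g (Fin.last m) = h (Fin.last m) := by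
    rw [← (Fin.snocEquiv _).symm.injective.eq_iff, funext_iff]
    simp [fin_two_add_eq_zero_iff, funext_iff, and_comm]
  rw [dotc_Ug2_mulVec]
  simp only [conj_psiRect]
  by_cases hx : g (Fin.last m) = h (Fin.last m)
  · have hconst : (fun _ : Fin (m + 1) => g (Fin.last m) + h (Fin.last m)) = 0 := by
      funext
      simp [hx, fin_two_add_self]
    simp only [hconst, add_zero, psiRect_mul_self, mul_ite, mul_zero, sum_ite_mem, univ_inter,
      ← sum_mul, sum_rectSupport_edgeChar]
    simp [hgh, hx]
  · have hconst : (fun _ : Fin (m + 1) => g (Fin.last m) + h (Fin.last m)) = 1 := by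
      funext
      exact Fin.eq_one_of_ne_zero _ (mt (fin_two_add_eq_zero_iff _ _).mp hx)
    simp [hconst, psiRect_mul_psiRect_add_one, hgh, hx]

end TetraBasis

open TetraBasis in
theorem stmt16_general (n : ℕ) [NeZero n] :
    dotc (psiRect n) (psiRect n) = 1 ∧
    (∀ g h : Fin n → Fin 2,
      dotc (Ug2 n g *ᵥ psiRect n) (Ug2 n h *ᵥ psiRect n) = if g = h then 1 else 0) ∧
    Submodule.span ℂ (Set.range fun g : Fin n → Fin 2 => Ug2 n g *ᵥ psiRect n) = ⊤ := by
  obtain ⟨m, rfl⟩ := Nat.exists_eq_succ_of_ne_zero (NeZero.ne n)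
  have horth := dotc_Ug2_mulVec_psiRect (m := m)
  have hU0 : Ug2 (m + 1) 0 *ᵥ psiRect (m + 1) = psiRect (m + 1) := by
    funext v
    rw [Ug2_mulVec]
    change edgeChar 0 v * psiRect (m + 1) (v + 0) = _
    simp [edgeChar_zero]
  refine ⟨by simpa [hU0] using horth 0 0, horth, ?_⟩
  exact (linearIndependent_of_dotc_eq_ite _ horth).span_eq_top_of_card_eq_finrank' (by simp)

theorem stmt16 (n : ℕ) [NeZero n] (hn : 2 ≤ n) :
    dotc (psiRect n) (psiRect n) = 1 ∧
    (∀ g h : Fin n → Fin 2,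
      dotc (Ug2 n g *ᵥ psiRect n) (Ug2 n h *ᵥ psiRect n) = if g = h then 1 else 0) ∧
    Submodule.span ℂ (Set.range fun g : Fin n → Fin 2 => Ug2 n g *ᵥ psiRect n) = ⊤ :=
  stmt16_general n
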